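/- Let α > 0, c ∈ [0,1], β > 0, and set γ := √(2β). Define f₀(x) := e^{−γx} and f₁(x) := e^{−γx}·[γ(e^{−2αx} − 1)/(2α(γ + α)) + cx]. Then f₁ is twice differentiable and satisfies (1/2)f₁''(x) − βf₁(x) + (e^{−2αx} − c)f₀'(x) = 0 for all x ∈ ℝ; moreover f₁(0) = 0 and f₁(x) → 0 as x → +∞. -/

import Mathlib

/-!
Conjugating by `e^{-γx}` turns `½ D² − γ²/2` into `½ D² − γ D`, so with `f₁ = e^{-γx} P` and
`2β = γ²` the equation for `f₁` becomes `½ P'' − γ P' = γ (e^{-2αx} − c)`. The bracket `P` solves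
this: its exponential part is matched because `2α · A (α + γ) = γ` for `A = γ / (2α(γ + α))`, and
`c x` is matched by `−γ c`. The boundary values are immediate since `e^{-γx}` beats the linear growth
of `P`.
-/

open Real Filter Topology

section ExpNegMul

variable {γ : ℝ}

theorem hasDerivAt_exp_const_mul (k x : ℝ) :
    HasDerivAt (fun x => exp (k * x)) (k * exp (k * x)) x := by
  simpa [mul_comm] using ((hasDerivAt_id x).const_mul k).exp

theorem tendsto_exp_neg_mul_mul_affine (hγ : 0 < γ) (a b : ℝ) :
    Tendsto (fun x => exp (-γ * x) * (a * x + b)) atTop (𝓝 0) := by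
  have h₁ := tendsto_rpow_mul_exp_neg_mul_atTop_nhds_zero 1 γ hγ
  have h₀ := tendsto_rpow_mul_exp_neg_mul_atTop_nhds_zero 0 γ hγ
  simp only [rpow_one, rpow_zero, one_mul] at h₁ h₀
  have h := (h₁.const_mul a).add (h₀.const_mul b)
  rw [mul_zero, mul_zero, add_zero] at h
  exact h.congr fun x => by ring

variable {P : ℝ → ℝ}

theorem hasDerivAt_exp_neg_mul_mul {p' x : ℝ} (hP : HasDerivAt P p' x) :
    HasDerivAt (fun x => exp (-γ * x) * P x) (exp (-γ * x) * (p' - γ * P x)) x :=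
  ((hasDerivAt_exp_const_mul (-γ) x).mul hP).congr_deriv (by ring)

theorem deriv_exp_neg_mul_mul (hP : Differentiable ℝ P) :
    deriv (fun x => exp (-γ * x) * P x) = fun x => exp (-γ * x) * (deriv P x - γ * P x) :=
  funext fun x => (hasDerivAt_exp_neg_mul_mul (hP x).hasDerivAt).deriv

theorem deriv_deriv_exp_neg_mul_mul (hP : Differentiable ℝ P)
    (hP' : Differentiable ℝ (deriv P)) :
    deriv (deriv fun x => exp (-γ * x) * P x) = fun x =>
      exp (-γ * x) * (deriv (deriv P) x - 2 * γ * deriv P x + γ ^ 2 * P x) := by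
  have hQ : Differentiable ℝ fun x => deriv P x - γ * P x := by fun_prop
  rw [deriv_exp_neg_mul_mul hP, deriv_exp_neg_mul_mul hQ]
  funext x
  rw [deriv_fun_sub (hP' x) ((hP x).const_mul γ), deriv_const_mul _ (hP x)]
  ring

end ExpNegMul

section FirstOrderFactor

variable (α γ c : ℝ)

noncomputable def firstOrderFactor (x : ℝ) : ℝ :=
  γ * (exp (-2 * α * x) - 1) / (2 * α * (γ + α)) + c * x

variable {α}

theorem hasDerivAt_firstOrderFactor (hα : α ≠ 0) (x : ℝ) :
    HasDerivAt (firstOrderFactor α γ c) (c - γ * exp (-2 * α * x) / (γ + α)) x := by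
  have h := ((((hasDerivAt_exp_const_mul (-2 * α) x).sub_const 1).const_mul γ).div_const
    (2 * α * (γ + α))).add ((hasDerivAt_id' x).const_mul c)
  exact h.congr_deriv (by field_simp; ring)

theorem deriv_firstOrderFactor (hα : α ≠ 0) :
    deriv (firstOrderFactor α γ c) = fun x => c - γ * exp (-2 * α * x) / (γ + α) :=
  funext fun x => (hasDerivAt_firstOrderFactor γ c hα x).deriv

theorem hasDerivAt_deriv_firstOrderFactor (hα : α ≠ 0) (x : ℝ) :
    HasDerivAt (deriv (firstOrderFactor α γ c))
      (2 * α * γ * exp (-2 * α * x) / (γ + α)) x := by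
  rw [deriv_firstOrderFactor γ c hα]
  exact ((((hasDerivAt_exp_const_mul (-2 * α) x).const_mul γ).div_const (γ + α)).const_sub
    c).congr_deriv (by ring)

theorem firstOrderFactor_ode (hα : α ≠ 0) (hγα : γ + α ≠ 0) (x : ℝ) :
    1 / 2 * deriv (deriv (firstOrderFactor α γ c)) x - γ * deriv (firstOrderFactor α γ c) x =
      γ * (exp (-2 * α * x) - c) := by
  rw [(hasDerivAt_deriv_firstOrderFactor γ c hα x).deriv, deriv_firstOrderFactor γ c hα]
  field_simp
  ring

theorem tendsto_exp_neg_mul_mul_firstOrderFactor (hα : 0 < α) (hγ : 0 < γ) :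
    Tendsto (fun x => exp (-γ * x) * firstOrderFactor α γ c x) atTop (𝓝 0) := by
  set A := γ / (2 * α * (γ + α))
  have hdecay : Tendsto (fun x => A * exp (-(γ + 2 * α) * x)) atTop (𝓝 0) := by
    simpa using (tendsto_rpow_mul_exp_neg_mul_atTop_nhds_zero 0 (γ + 2 * α)
      (by positivity)).const_mul A
  have h := hdecay.add (tendsto_exp_neg_mul_mul_affine hγ c (-A))
  rw [add_zero] at h
  refine h.congr fun x => ?_
  rw [firstOrderFactor, show -(γ + 2 * α) * x = -γ * x + -2 * α * x by ring, exp_add]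
  ring

end FirstOrderFactor

theorem first_order_perturbation_term_general
    (α c β : ℝ) (hα : 0 < α) (hβ : 0 < β)
    (γ : ℝ) (hγ : γ = Real.sqrt (2 * β))
    (f₀ f₁ : ℝ → ℝ)
    (hf₀ : ∀ x, f₀ x = Real.exp (-γ * x))
    (hf₁ : ∀ x, f₁ x = Real.exp (-γ * x) *
      (γ * (Real.exp (-2 * α * x) - 1) / (2 * α * (γ + α)) + c * x)) :
    (∀ x, DifferentiableAt ℝ f₁ x) ∧ (∀ x, DifferentiableAt ℝ (deriv f₁) x) ∧
      (∀ x : ℝ, (1 / 2) * deriv (deriv f₁) x - β * f₁ x +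
        (Real.exp (-2 * α * x) - c) * deriv f₀ x = 0) ∧
      f₁ 0 = 0 ∧
      Filter.Tendsto f₁ Filter.atTop (nhds 0) := by
  have hγpos : 0 < γ := hγ ▸ Real.sqrt_pos.2 (by positivity)
  have hγsq : γ ^ 2 = 2 * β := hγ ▸ Real.sq_sqrt (by positivity)
  have hP : Differentiable ℝ (firstOrderFactor α γ c) := fun x =>
    (hasDerivAt_firstOrderFactor γ c hα.ne' x).differentiableAt
  have hP' : Differentiable ℝ (deriv (firstOrderFactor α γ c)) := fun x =>
    (hasDerivAt_deriv_firstOrderFactor γ c hα.ne' x).differentiableAt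
  have hf₀' : deriv f₀ = fun x => -γ * exp (-γ * x) :=
    funext hf₀ ▸ funext fun x => (hasDerivAt_exp_const_mul (-γ) x).deriv
  obtain rfl : f₁ = fun x => exp (-γ * x) * firstOrderFactor α γ c x := funext hf₁
  refine ⟨fun x => by fun_prop, ?_, fun x => ?_, by simp [firstOrderFactor],
    tendsto_exp_neg_mul_mul_firstOrderFactor γ c hα hγpos⟩
  · rw [deriv_exp_neg_mul_mul hP]
    fun_prop
  · rw [deriv_deriv_exp_neg_mul_mul hP hP', hf₀']
    linear_combination exp (-γ * x) * firstOrderFactor_ode γ c hα.ne' (by positivity) x +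
      exp (-γ * x) * firstOrderFactor α γ c x / 2 * hγsq

/-- The first-order perturbation term for the downward FPT Laplace transform:
with `γ = √(2β)`, `f₀(x) = e^{−γx}` and
`f₁(x) = e^{−γx} (γ(e^{−2αx} − 1)/(2α(γ + α)) + cx)`,
`f₁` is twice differentiable, solves `(1/2)f₁'' − βf₁ + (e^{−2αx} − c)f₀' = 0` on `ℝ`,
satisfies `f₁(0) = 0` and `f₁(x) → 0` as `x → +∞`. -/
theorem first_order_perturbation_term
    (α c β : ℝ) (hα : 0 < α) (hc0 : 0 ≤ c) (hc1 : c ≤ 1) (hβ : 0 < β)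
    (γ : ℝ) (hγ : γ = Real.sqrt (2 * β))
    (f₀ f₁ : ℝ → ℝ)
    (hf₀ : ∀ x, f₀ x = Real.exp (-γ * x))
    (hf₁ : ∀ x, f₁ x = Real.exp (-γ * x) *
      (γ * (Real.exp (-2 * α * x) - 1) / (2 * α * (γ + α)) + c * x)) :
    (∀ x, DifferentiableAt ℝ f₁ x) ∧ (∀ x, DifferentiableAt ℝ (deriv f₁) x) ∧
      (∀ x : ℝ, (1 / 2) * deriv (deriv f₁) x - β * f₁ x +
        (Real.exp (-2 * α * x) - c) * deriv f₀ x = 0) ∧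
      f₁ 0 = 0 ∧
      Filter.Tendsto f₁ Filter.atTop (nhds 0) :=
  first_order_perturbation_term_general α c β hα hβ γ hγ f₀ f₁ hf₀ hf₁
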